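/- arXiv:1307.1936 — 4 statements merged into one kernel-verified Lean document; each statement's English description precedes it below -/
import Mathlib

section
/- On a simply connected open subset V ⊂ S^n \ S^{n-2}, the Hessians of the lifted polar functions r and θ (defined by (x₁,x₂) = r(x)(cos θ(x), sin θ(x))) satisfy Hess r = −r g_s + r dθ ⊗ dθ and Hess θ = −r^{-1}(dr ⊗ dθ + dθ ⊗ dr). -/
open scoped RealInnerProductSpace

/-- The radial function `r(x) = √(x₁² + x₂²)` on `ℝ^{n+1}`. -/
noncomputable def rad {n : ℕ} (x : EuclideanSpace ℝ (Fin (n + 1))) : ℝ :=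
  Real.sqrt ((x 0) ^ 2 + (x 1) ^ 2)

/-- On a simply connected open subset `V = U ∩ S^n` of `S^n \ S^{n-2}`, the
Hessians (with respect to the round metric, computed as second derivatives along
great-circle geodesics through `x` with unit initial velocity `v`) of the lifted
polar functions `r` and `θ` (with `(x₁, x₂) = r(x)(cos θ(x), sin θ(x))`) satisfy
`Hess r = -r g_s + r dθ ⊗ dθ` and `Hess θ = -r⁻¹ (dr ⊗ dθ + dθ ⊗ dr)`,
evaluated on the unit tangent vector `v` (where `g_s(v,v) = 1`, and the
differentials `dr(v)`, `dθ(v)` are derivatives along the geodesic at `t = 0`). -/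
theorem stmt6 {n : ℕ} (hn : 1 ≤ n)
    (U : Set (EuclideanSpace ℝ (Fin (n + 1)))) (hUopen : IsOpen U)
    (hUavoid : ∀ x ∈ U, ¬(x 0 = 0 ∧ x 1 = 0))
    (hsc : SimplyConnectedSpace
      ↥(U ∩ Metric.sphere (0 : EuclideanSpace ℝ (Fin (n + 1))) 1))
    (θ : EuclideanSpace ℝ (Fin (n + 1)) → ℝ)
    (hθ : ContDiffOn ℝ (⊤ : ℕ∞) θ U)
    (hpolar : ∀ x ∈ U,
      x 0 = rad x * Real.cos (θ x) ∧ x 1 = rad x * Real.sin (θ x))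
    (x v : EuclideanSpace ℝ (Fin (n + 1)))
    (hxU : x ∈ U) (hxs : ‖x‖ = 1) (hv : ‖v‖ = 1) (hxv : ⟪x, v⟫ = 0) :
    deriv (deriv (fun t : ℝ => rad (Real.cos t • x + Real.sin t • v))) 0
        = -(rad x) * 1
          + rad x * (deriv (fun t : ℝ => θ (Real.cos t • x + Real.sin t • v)) 0) ^ 2
    ∧ deriv (deriv (fun t : ℝ => θ (Real.cos t • x + Real.sin t • v))) 0
        = -(rad x)⁻¹ *
            (2 * deriv (fun t : ℝ => rad (Real.cos t • x + Real.sin t • v)) 0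
              * deriv (fun t : ℝ => θ (Real.cos t • x + Real.sin t • v)) 0) := by
  classical
  set γ : ℝ → EuclideanSpace ℝ (Fin (n + 1)) :=
    fun t => Real.cos t • x + Real.sin t • v with hγdef
  have hγ : ContDiff ℝ (⊤ : ℕ∞) γ :=
    (Real.contDiff_cos.smul contDiff_const).add (Real.contDiff_sin.smul contDiff_const)
  -- coordinate functions
  set a : ℝ → ℝ := fun t => Real.cos t * x 0 + Real.sin t * v 0 with hadef
  set b : ℝ → ℝ := fun t => Real.cos t * x 1 + Real.sin t * v 1 with hbdef
  have hcoord0 : ∀ t, γ t 0 = a t := by intro t; simp [hγdef, hadef]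
  have hcoord1 : ∀ t, γ t 1 = b t := by intro t; simp [hγdef, hbdef]
  have hγ0 : γ 0 = x := by simp [hγdef]
  -- the open set of parameters
  set s : Set ℝ := γ ⁻¹' U with hsdef
  have hsopen : IsOpen s := hUopen.preimage hγ.continuous
  have h0s : (0 : ℝ) ∈ s := by simp [hsdef, hγ0, hxU]
  have hsU : ∀ t ∈ s, γ t ∈ U := fun t ht => ht
  -- ρ and φ
  set ρ : ℝ → ℝ := fun t : ℝ => rad (Real.cos t • x + Real.sin t • v) with hρdef
  set φ : ℝ → ℝ := fun t : ℝ => θ (Real.cos t • x + Real.sin t • v) with hφdef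
  have hρalt : ρ = fun t => Real.sqrt (a t ^ 2 + b t ^ 2) := by
    funext t
    rw [hρdef]
    show rad (γ t) = _
    rw [rad, hcoord0, hcoord1]
  have hρ0 : ρ 0 = rad x := by rw [hρdef]; show rad (γ 0) = rad x; rw [hγ0]
  have hφγ : φ = fun t => θ (γ t) := rfl
  -- positivity on s
  have hpos : ∀ t ∈ s, 0 < a t ^ 2 + b t ^ 2 := by
    intro t ht
    have h := hUavoid (γ t) (hsU t ht)
    rw [hcoord0, hcoord1] at h
    rcases not_and_or.1 h with h' | h' <;> positivity
  have hρpos : ∀ t ∈ s, 0 < ρ t := by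
    intro t ht
    rw [hρalt]
    exact Real.sqrt_pos.2 (hpos t ht)
  -- smoothness of a, b
  have hadiff : ContDiff ℝ (⊤ : ℕ∞) a :=
    (Real.contDiff_cos.mul contDiff_const).add (Real.contDiff_sin.mul contDiff_const)
  have hbdiff : ContDiff ℝ (⊤ : ℕ∞) b :=
    (Real.contDiff_cos.mul contDiff_const).add (Real.contDiff_sin.mul contDiff_const)
  -- smoothness of ρ on s
  have hρC : ContDiffOn ℝ (⊤ : ℕ∞) ρ s := by
    rw [hρalt]
    intro t ht
    apply ContDiffAt.contDiffWithinAt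
    exact (Real.contDiffAt_sqrt (ne_of_gt (hpos t ht))).comp t
      ((hadiff.pow 2).add (hbdiff.pow 2)).contDiffAt
  -- smoothness of φ on s
  have hφC : ContDiffOn ℝ (⊤ : ℕ∞) φ s := by
    rw [hφγ]
    intro t ht
    apply ContDiffAt.contDiffWithinAt
    exact (hθ.contDiffAt (hUopen.mem_nhds (hsU t ht))).comp t hγ.contDiffAt
  -- differentiability facts
  have hρd : ∀ t ∈ s, DifferentiableAt ℝ ρ t := fun t ht =>
    ((hρC t ht).differentiableWithinAt (by norm_num)).differentiableAt (hsopen.mem_nhds ht)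
  have hφd : ∀ t ∈ s, DifferentiableAt ℝ φ t := fun t ht =>
    ((hφC t ht).differentiableWithinAt (by norm_num)).differentiableAt (hsopen.mem_nhds ht)
  have hρd' : DifferentiableAt ℝ (deriv ρ) 0 := by
    have := hρC.deriv_of_isOpen hsopen (m := (⊤ : ℕ∞)) (by simp)
    exact ((this 0 h0s).differentiableWithinAt (by norm_num)).differentiableAt
      (hsopen.mem_nhds h0s)
  have hφd' : DifferentiableAt ℝ (deriv φ) 0 := by
    have := hφC.deriv_of_isOpen hsopen (m := (⊤ : ℕ∞)) (by simp)
    exact ((this 0 h0s).differentiableWithinAt (by norm_num)).differentiableAt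
      (hsopen.mem_nhds h0s)
  -- polar identities on s
  have heq1 : ∀ t ∈ s, a t = ρ t * Real.cos (φ t) := by
    intro t ht
    have h := (hpolar (γ t) (hsU t ht)).1
    rw [hcoord0] at h
    exact h
  have heq2 : ∀ t ∈ s, b t = ρ t * Real.sin (φ t) := by
    intro t ht
    have h := (hpolar (γ t) (hsU t ht)).2
    rw [hcoord1] at h
    exact h
  -- derivatives of a, b
  have hA : ∀ t, HasDerivAt a (-Real.sin t * x 0 + Real.cos t * v 0) t := fun t =>
    ((Real.hasDerivAt_cos t).mul_const _).add ((Real.hasDerivAt_sin t).mul_const _)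
  have hB : ∀ t, HasDerivAt b (-Real.sin t * x 1 + Real.cos t * v 1) t := fun t =>
    ((Real.hasDerivAt_cos t).mul_const _).add ((Real.hasDerivAt_sin t).mul_const _)
  set a' : ℝ → ℝ := fun t => -Real.sin t * x 0 + Real.cos t * v 0 with ha'def
  set b' : ℝ → ℝ := fun t => -Real.sin t * x 1 + Real.cos t * v 1 with hb'def
  have hA' : ∀ t, HasDerivAt a' (-(a t)) t := by
    intro t
    have h : HasDerivAt a' (-Real.cos t * x 0 + -Real.sin t * v 0) t :=
      (((Real.hasDerivAt_sin t).neg).mul_const _).add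
        (((Real.hasDerivAt_cos t)).mul_const _)
    convert h using 1
    simp [hadef]; ring
  have hB' : ∀ t, HasDerivAt b' (-(b t)) t := by
    intro t
    have h : HasDerivAt b' (-Real.cos t * x 1 + -Real.sin t * v 1) t :=
      (((Real.hasDerivAt_sin t).neg).mul_const _).add
        (((Real.hasDerivAt_cos t)).mul_const _)
    convert h using 1
    simp [hbdef]; ring
  -- first-derivative identities on s
  have hD1 : ∀ t ∈ s, a' t =
      deriv ρ t * Real.cos (φ t) + ρ t * (-Real.sin (φ t) * deriv φ t) := by
    intro t ht
    have hev : a =ᶠ[nhds t] fun u => ρ u * Real.cos (φ u) :=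
      Filter.eventuallyEq_of_mem (hsopen.mem_nhds ht) heq1
    have hrhs : HasDerivAt (fun u => ρ u * Real.cos (φ u))
        (deriv ρ t * Real.cos (φ t) + ρ t * (-Real.sin (φ t) * deriv φ t)) t :=
      (hρd t ht).hasDerivAt.mul
        ((Real.hasDerivAt_cos (φ t)).comp t (hφd t ht).hasDerivAt)
    exact ((hrhs.congr_of_eventuallyEq hev).unique (hA t)).symm
  have hD2 : ∀ t ∈ s, b' t =
      deriv ρ t * Real.sin (φ t) + ρ t * (Real.cos (φ t) * deriv φ t) := by
    intro t ht
    have hev : b =ᶠ[nhds t] fun u => ρ u * Real.sin (φ u) :=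
      Filter.eventuallyEq_of_mem (hsopen.mem_nhds ht) heq2
    have hrhs : HasDerivAt (fun u => ρ u * Real.sin (φ u))
        (deriv ρ t * Real.sin (φ t) + ρ t * (Real.cos (φ t) * deriv φ t)) t :=
      (hρd t ht).hasDerivAt.mul
        ((Real.hasDerivAt_sin (φ t)).comp t (hφd t ht).hasDerivAt)
    exact ((hrhs.congr_of_eventuallyEq hev).unique (hB t)).symm
  -- abbreviations at 0
  set R0 : ℝ := ρ 0 with hR0
  set R' : ℝ := deriv ρ 0 with hR'
  set R'' : ℝ := deriv (deriv ρ) 0 with hR''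
  set F0 : ℝ := φ 0 with hF0
  set F' : ℝ := deriv φ 0 with hF'
  set F'' : ℝ := deriv (deriv φ) 0 with hF''
  set C : ℝ := Real.cos F0 with hC
  set S : ℝ := Real.sin F0 with hS
  have hpyth : C ^ 2 + S ^ 2 = 1 := by
    rw [hC, hS, add_comm]; exact Real.sin_sq_add_cos_sq F0
  have hR0pos : 0 < R0 := hρpos 0 h0s
  -- second-derivative pieces at 0
  have hdR : HasDerivAt (deriv ρ) R'' 0 := hρd'.hasDerivAt
  have hdF : HasDerivAt (deriv φ) F'' 0 := hφd'.hasDerivAt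
  have hρ0' : HasDerivAt ρ R' 0 := (hρd 0 h0s).hasDerivAt
  have hφ0' : HasDerivAt φ F' 0 := (hφd 0 h0s).hasDerivAt
  have hcosφ : HasDerivAt (fun t => Real.cos (φ t)) (-S * F') 0 :=
    by have h := (Real.hasDerivAt_cos F0).comp (h₂ := Real.cos) 0 hφ0'; exact h
  have hsinφ : HasDerivAt (fun t => Real.sin (φ t)) (C * F') 0 :=
    by have h := (Real.hasDerivAt_sin F0).comp (h₂ := Real.sin) 0 hφ0'; exact h
  -- second derivative of a via the polar form
  have hE1 : -(R0 * C) = R'' * C + R' * (-S * F')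
      + (R' * (-S * F') + R0 * ((-(C * F')) * F' + -S * F'')) := by
    have hrhs : HasDerivAt
        (fun t => deriv ρ t * Real.cos (φ t) + ρ t * (-Real.sin (φ t) * deriv φ t))
        (R'' * C + R' * (-S * F')
          + (R' * (-S * F') + R0 * ((-(C * F')) * F' + -S * F''))) 0 :=
      (hdR.mul hcosφ).add (hρ0'.mul ((hsinφ.neg).mul hdF))
    have hev : a' =ᶠ[nhds 0]
        fun t => deriv ρ t * Real.cos (φ t) + ρ t * (-Real.sin (φ t) * deriv φ t) :=
      Filter.eventuallyEq_of_mem (hsopen.mem_nhds h0s) hD1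
    have := (hrhs.congr_of_eventuallyEq hev).unique (hA' 0)
    rw [this, heq1 0 h0s, hR0, hC, hF0]
  have hE2 : -(R0 * S) = R'' * S + R' * (C * F')
      + (R' * (C * F') + R0 * ((-S * F') * F' + C * F'')) := by
    have hrhs : HasDerivAt
        (fun t => deriv ρ t * Real.sin (φ t) + ρ t * (Real.cos (φ t) * deriv φ t))
        (R'' * S + R' * (C * F')
          + (R' * (C * F') + R0 * ((-S * F') * F' + C * F''))) 0 :=
      (hdR.mul hsinφ).add (hρ0'.mul (hcosφ.mul hdF))
    have hev : b' =ᶠ[nhds 0]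
        fun t => deriv ρ t * Real.sin (φ t) + ρ t * (Real.cos (φ t) * deriv φ t) :=
      Filter.eventuallyEq_of_mem (hsopen.mem_nhds h0s) hD2
    have := (hrhs.congr_of_eventuallyEq hev).unique (hB' 0)
    rw [this, heq2 0 h0s, hR0, hS, hF0]
  -- solve the linear system
  have goal1 : R'' = -R0 * 1 + R0 * F' ^ 2 := by
    linear_combination (-C) * hE1 + (-S) * hE2 - (R'' + R0 - R0 * F' ^ 2) * hpyth
  have goal2 : F'' = -R0⁻¹ * (2 * R' * F') := by
    have key : R0 * F'' + 2 * R' * F' = 0 := by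
      linear_combination S * hE1 + (-C) * hE2 - (R0 * F'' + 2 * R' * F') * hpyth
    have hne : R0 ≠ 0 := hR0pos.ne'
    field_simp
    linarith
  rw [← hρ0]
  exact ⟨goal1, goal2⟩
end

section
/- Let K be a compact subset of a simply connected subset V of S^n \ S^{n-2}, and let c ∈ (0,1) satisfy r > c on K, where r(x) = √(x₁² + x₂²). Then the function φ = θ + arcsin(c r^{-1}) is well-defined and smooth on K, and for every unit tangent vector X with dφ(X) = 0 one has Hess φ (X,X) > 0. -/
open scoped RealInnerProductSpace

noncomputable section stmt8aux

def aF (A B t : ℝ) : ℝ := Real.cos t * A + Real.sin t * B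
def rhoF (A B C D t : ℝ) : ℝ := aF A B t ^ 2 + aF C D t ^ 2
def PF (A B C D t : ℝ) : ℝ :=
  2 * (aF A B t * aF B (-A) t + aF C D t * aF D (-C) t)
def RF (A B C D t : ℝ) : ℝ := Real.sqrt (rhoF A B C D t)
def sF (A B C D c t : ℝ) : ℝ := Real.sqrt (rhoF A B C D t - c ^ 2)
def GF (A B C D c t : ℝ) : ℝ :=
  (A * D - C * B) * (rhoF A B C D t)⁻¹
    - c * PF A B C D t * (2 * rhoF A B C D t * sF A B C D c t)⁻¹

lemma haF (A B t : ℝ) : HasDerivAt (fun u => aF A B u) (aF B (-A) t) t := by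
  have h := ((Real.hasDerivAt_cos t).mul_const A).add ((Real.hasDerivAt_sin t).mul_const B)
  unfold aF
  convert h using 1 <;> try rfl
  ring

lemma hrhoF (A B C D t : ℝ) :
    HasDerivAt (fun u => rhoF A B C D u) (PF A B C D t) t := by
  have h := (((haF A B t).pow 2)).add ((haF C D t).pow 2)
  unfold rhoF PF
  convert h using 1 <;> try rfl
  push_cast
  ring

lemma hPF (A B C D t : ℝ) :
    HasDerivAt (fun u => PF A B C D u)
      (2 * (aF B (-A) t ^ 2 + aF D (-C) t ^ 2 - rhoF A B C D t)) t := by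
  have h := (((haF A B t).mul (haF B (-A) t)).add ((haF C D t).mul (haF D (-C) t))).const_mul 2
  unfold PF
  convert h using 1 <;> try rfl
  unfold rhoF aF
  ring

lemma harcsinF (A B C D c t : ℝ) (hc : 0 < c) (hρ : c ^ 2 < rhoF A B C D t) :
    HasDerivAt (fun u => Real.arcsin (c * (RF A B C D u)⁻¹))
      (-(c * PF A B C D t * (2 * rhoF A B C D t * sF A B C D c t)⁻¹)) t := by
  have hρ0 : 0 < rhoF A B C D t := lt_trans (by positivity) hρ
  have hRpos : 0 < RF A B C D t := Real.sqrt_pos.mpr hρ0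
  have hR2 : RF A B C D t ^ 2 = rhoF A B C D t := Real.sq_sqrt hρ0.le
  have hcR : c < RF A B C D t := by
    have := Real.sqrt_lt_sqrt (by positivity) hρ
    simpa [Real.sqrt_sq hc.le, RF] using this
  have hspos : 0 < sF A B C D c t := Real.sqrt_pos.mpr (by linarith)
  have hz1 : c * (RF A B C D t)⁻¹ < 1 := by
    rw [mul_inv_lt_iff₀ hRpos, one_mul]; exact hcR
  have hz0 : 0 < c * (RF A B C D t)⁻¹ := by positivity
  have hRt : HasDerivAt (fun u => RF A B C D u)
      (1 / (2 * Real.sqrt (rhoF A B C D t)) * PF A B C D t) t :=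
    (Real.hasDerivAt_sqrt hρ0.ne').comp t (hrhoF A B C D t)
  have hzd : HasDerivAt (fun u => c * (RF A B C D u)⁻¹)
      (c * (-(1 / (2 * Real.sqrt (rhoF A B C D t)) * PF A B C D t) / RF A B C D t ^ 2)) t :=
    (hRt.inv hRpos.ne').const_mul c
  have harc := (Real.hasDerivAt_arcsin (by linarith : c * (RF A B C D t)⁻¹ ≠ -1)
      hz1.ne).comp t hzd
  convert harc using 1 <;> try rfl
  have h1z : 1 - (c * (RF A B C D t)⁻¹) ^ 2 = (rhoF A B C D t - c ^ 2) / rhoF A B C D t := by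
    field_simp
    linear_combination c ^ 2 * hR2
  rw [h1z, Real.sqrt_div (by linarith) _]
  have hsR : Real.sqrt (rhoF A B C D t - c ^ 2) = sF A B C D c t := rfl
  have hRR : Real.sqrt (rhoF A B C D t) = RF A B C D t := rfl
  rw [hsR, hRR]
  rw [← hR2]
  field_simp

lemma algaux (W p q ρ s c : ℝ) (hc : 0 < c) (hρ : 0 < ρ) (hs : 0 < s)
    (hs2 : s ^ 2 = ρ - c ^ 2)
    (hW : W * ρ⁻¹ - c * p * (2 * ρ * s)⁻¹ = 0)
    (hkey : p ^ 2 + 4 * W ^ 2 = 2 * ρ * q + 4 * ρ ^ 2) :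
    0 < W * (-p / ρ ^ 2) -
      (c * q * (2 * ρ * s)⁻¹ + c * p * (-(2 * p * s + 2 * ρ * (1 / (2 * s) * p)) / (2 * ρ * s) ^ 2)) := by
  have key : W * (-p / ρ ^ 2) -
      (c * q * (2 * ρ * s)⁻¹ + c * p * (-(2 * p * s + 2 * ρ * (1 / (2 * s) * p)) / (2 * ρ * s) ^ 2))
      = c / s := by
    have h1 : 2 * W * s = c * p := by
      field_simp at hW
      nlinarith [hW, hρ, hs]
    have hp : p = 2 * W * s / c := by field_simp; linarith [h1]
    rw [hp] at hkey ⊢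
    have hq : q = ((2 * W * s / c) ^ 2 + 4 * W ^ 2 - 4 * ρ ^ 2) / (2 * ρ) := by
      field_simp
      field_simp at hkey
      linarith [hkey]
    rw [hq]
    have hρe : ρ = s ^ 2 + c ^ 2 := by linarith [hs2]
    rw [hρe]
    have h1' : s ^ 2 + c ^ 2 > 0 := by positivity
    field_simp
    ring
  rw [key]
  positivity

theorem coreT (A B C D c : ℝ) (hc : 0 < c) (T : ℝ → ℝ) (S : Set ℝ)
    (hSo : IsOpen S) (h0S : (0 : ℝ) ∈ S)
    (hTd : ∀ t ∈ S, DifferentiableAt ℝ T t)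
    (hρS : ∀ t ∈ S, c ^ 2 < rhoF A B C D t)
    (hpa : ∀ t ∈ S, aF A B t = RF A B C D t * Real.cos (T t))
    (hpb : ∀ t ∈ S, aF C D t = RF A B C D t * Real.sin (T t))
    (hcrit : deriv (fun t => T t + Real.arcsin (c * (RF A B C D t)⁻¹)) 0 = 0) :
    0 < deriv (deriv (fun t => T t + Real.arcsin (c * (RF A B C D t)⁻¹))) 0 := by
  -- derivative of T on S
  have hTder : ∀ t ∈ S, deriv T t = (A * D - C * B) * (rhoF A B C D t)⁻¹ := by
    intro t ht
    have hρt := hρS t ht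
    have hρ0 : 0 < rhoF A B C D t := lt_trans (by positivity) hρt
    have hRpos : 0 < RF A B C D t := Real.sqrt_pos.mpr hρ0
    have hR2 : RF A B C D t ^ 2 = rhoF A B C D t := Real.sq_sqrt hρ0.le
    have hT := (hTd t ht).hasDerivAt
    have hRt : HasDerivAt (fun u => RF A B C D u)
        (1 / (2 * Real.sqrt (rhoF A B C D t)) * PF A B C D t) t :=
      (Real.hasDerivAt_sqrt hρ0.ne').comp t (hrhoF A B C D t)
    have hcos : HasDerivAt (fun u => Real.cos (T u)) (-Real.sin (T t) * deriv T t) t :=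
      (Real.hasDerivAt_cos (T t)).comp t hT
    have hsin : HasDerivAt (fun u => Real.sin (T u)) (Real.cos (T t) * deriv T t) t :=
      (Real.hasDerivAt_sin (T t)).comp t hT
    have ha' : HasDerivAt (fun u => aF A B u)
        (1 / (2 * Real.sqrt (rhoF A B C D t)) * PF A B C D t * Real.cos (T t)
          + RF A B C D t * (-Real.sin (T t) * deriv T t)) t :=
      (hRt.mul hcos).congr_of_eventuallyEq
        (Filter.eventually_of_mem (hSo.mem_nhds ht) (fun u hu => hpa u hu))
    have hb' : HasDerivAt (fun u => aF C D u)
        (1 / (2 * Real.sqrt (rhoF A B C D t)) * PF A B C D t * Real.sin (T t)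
          + RF A B C D t * (Real.cos (T t) * deriv T t)) t :=
      (hRt.mul hsin).congr_of_eventuallyEq
        (Filter.eventually_of_mem (hSo.mem_nhds ht) (fun u hu => hpb u hu))
    have eqa := (haF A B t).unique ha'
    have eqb := (haF C D t).unique hb'
    have hWt : aF A B t * aF D (-C) t - aF C D t * aF B (-A) t = A * D - C * B := by
      unfold aF
      linear_combination (A * D - C * B) * (Real.sin_sq_add_cos_sq t)
    have hRR : Real.sqrt (rhoF A B C D t) = RF A B C D t := rfl
    have key : rhoF A B C D t * deriv T t = A * D - C * B := by
      rw [← hWt, hpa t ht, hpb t ht, eqa, eqb, hRR]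
      linear_combination (-(RF A B C D t ^ 2 * deriv T t)) * (Real.sin_sq_add_cos_sq (T t))
        - deriv T t * hR2
    field_simp
    linarith [key]
  -- deriv of f equals GF on S
  have hfd : ∀ t ∈ S, deriv (fun u => T u + Real.arcsin (c * (RF A B C D u)⁻¹)) t
      = GF A B C D c t := by
    intro t ht
    have hg := harcsinF A B C D c t hc (hρS t ht)
    rw [deriv_fun_add (hTd t ht) hg.differentiableAt, hTder t ht, hg.deriv]
    unfold GF
    ring
  have hev : deriv (fun u => T u + Real.arcsin (c * (RF A B C D u)⁻¹))
      =ᶠ[nhds 0] GF A B C D c :=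
    Filter.eventually_of_mem (hSo.mem_nhds h0S) hfd
  have hdd : deriv (deriv (fun u => T u + Real.arcsin (c * (RF A B C D u)⁻¹))) 0
      = deriv (GF A B C D c) 0 := hev.deriv_eq
  have hG0 : GF A B C D c 0 = 0 := by rw [← hfd 0 h0S]; exact hcrit
  -- compute deriv of GF at 0
  have hρc : c ^ 2 < rhoF A B C D 0 := hρS 0 h0S
  have hρ0 : 0 < rhoF A B C D 0 := lt_trans (by positivity) hρc
  have hspos : 0 < sF A B C D c 0 := Real.sqrt_pos.mpr (by linarith)
  have hs2 : sF A B C D c 0 ^ 2 = rhoF A B C D 0 - c ^ 2 := Real.sq_sqrt (by linarith)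
  have hsub : HasDerivAt (fun t => rhoF A B C D t - c ^ 2) (PF A B C D 0) 0 :=
    (hrhoF A B C D 0).sub_const _
  have hs' : HasDerivAt (fun t => sF A B C D c t)
      (1 / (2 * Real.sqrt (rhoF A B C D 0 - c ^ 2)) * PF A B C D 0) 0 :=
    (Real.hasDerivAt_sqrt (by linarith)).comp 0 hsub
  have hsS : Real.sqrt (rhoF A B C D 0 - c ^ 2) = sF A B C D c 0 := rfl
  rw [hsS] at hs'
  have hterm1 : HasDerivAt (fun t => (A * D - C * B) * (rhoF A B C D t)⁻¹)
      ((A * D - C * B) * (-PF A B C D 0 / rhoF A B C D 0 ^ 2)) 0 :=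
    ((hrhoF A B C D 0).inv hρ0.ne').const_mul _
  have hh : HasDerivAt (fun t => 2 * rhoF A B C D t * sF A B C D c t)
      (2 * PF A B C D 0 * sF A B C D c 0
        + 2 * rhoF A B C D 0 * (1 / (2 * sF A B C D c 0) * PF A B C D 0)) 0 :=
    ((hrhoF A B C D 0).const_mul 2).mul hs'
  have hh0 : 2 * rhoF A B C D 0 * sF A B C D c 0 ≠ 0 := by positivity
  have hterm2 : HasDerivAt (fun t => c * PF A B C D t * (2 * rhoF A B C D t * sF A B C D c t)⁻¹)
      (c * (2 * (aF B (-A) 0 ^ 2 + aF D (-C) 0 ^ 2 - rhoF A B C D 0))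
          * (2 * rhoF A B C D 0 * sF A B C D c 0)⁻¹
        + c * PF A B C D 0 * (-(2 * PF A B C D 0 * sF A B C D c 0
            + 2 * rhoF A B C D 0 * (1 / (2 * sF A B C D c 0) * PF A B C D 0))
              / (2 * rhoF A B C D 0 * sF A B C D c 0) ^ 2)) 0 :=
    ((hPF A B C D 0).const_mul c).mul (hh.inv hh0)
  have hG' : HasDerivAt (GF A B C D c)
      ((A * D - C * B) * (-PF A B C D 0 / rhoF A B C D 0 ^ 2)
        - (c * (2 * (aF B (-A) 0 ^ 2 + aF D (-C) 0 ^ 2 - rhoF A B C D 0))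
            * (2 * rhoF A B C D 0 * sF A B C D c 0)⁻¹
          + c * PF A B C D 0 * (-(2 * PF A B C D 0 * sF A B C D c 0
              + 2 * rhoF A B C D 0 * (1 / (2 * sF A B C D c 0) * PF A B C D 0))
                / (2 * rhoF A B C D 0 * sF A B C D c 0) ^ 2))) 0 := by
    unfold GF
    exact hterm1.sub hterm2
  rw [hdd, hG'.deriv]
  have hkey : PF A B C D 0 ^ 2 + 4 * (A * D - C * B) ^ 2
      = 2 * rhoF A B C D 0 * (2 * (aF B (-A) 0 ^ 2 + aF D (-C) 0 ^ 2 - rhoF A B C D 0))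
        + 4 * rhoF A B C D 0 ^ 2 := by
    simp [PF, rhoF, aF]
    ring
  have hG0' : (A * D - C * B) * (rhoF A B C D 0)⁻¹
      - c * PF A B C D 0 * (2 * rhoF A B C D 0 * sF A B C D c 0)⁻¹ = 0 := hG0
  exact algaux (A * D - C * B) (PF A B C D 0)
    (2 * (aF B (-A) 0 ^ 2 + aF D (-C) 0 ^ 2 - rhoF A B C D 0))
    (rhoF A B C D 0) (sF A B C D c 0) c hc hρ0 hspos hs2 hG0' hkey

end stmt8aux

/-- Let `K` be a compact subset of a simply connected (relatively open) subset
`V = U ∩ S^n` of `S^n \ S^{n-2}`, and let `c₀ ∈ (0,1)` satisfy `r > c₀` on `K`.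
Then `φ = θ + arcsin (c₀ r⁻¹)` is well-defined and smooth on `K`, and for every
unit tangent vector `X = v` at a point `x ∈ K` with `dφ(X) = 0` one has
`Hess φ (X, X) > 0` (Hessian computed as the second derivative along the
great-circle geodesic `t ↦ cos t • x + sin t • v`). -/

theorem stmt8 {n : ℕ} (hn : 1 ≤ n)
    (U : Set (EuclideanSpace ℝ (Fin (n + 1)))) (hUopen : IsOpen U)
    (hUavoid : ∀ x ∈ U, ¬(x 0 = 0 ∧ x 1 = 0))
    (hsc : SimplyConnectedSpace
      ↥(U ∩ Metric.sphere (0 : EuclideanSpace ℝ (Fin (n + 1))) 1))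
    (θ : EuclideanSpace ℝ (Fin (n + 1)) → ℝ)
    (hθ : ContDiffOn ℝ (⊤ : ℕ∞) θ U)
    (hpolar : ∀ x ∈ U,
      x 0 = rad x * Real.cos (θ x) ∧ x 1 = rad x * Real.sin (θ x))
    (K : Set (EuclideanSpace ℝ (Fin (n + 1)))) (hKc : IsCompact K)
    (hK : K ⊆ U ∩ Metric.sphere (0 : EuclideanSpace ℝ (Fin (n + 1))) 1)
    (c₀ : ℝ) (hc₀ : c₀ ∈ Set.Ioo (0 : ℝ) 1) (hrc : ∀ x ∈ K, c₀ < rad x) :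
    ContDiffOn ℝ (⊤ : ℕ∞) (fun y => θ y + Real.arcsin (c₀ * (rad y)⁻¹)) K
    ∧ ∀ x ∈ K, ∀ v : EuclideanSpace ℝ (Fin (n + 1)),
        ‖v‖ = 1 → ⟪x, v⟫ = 0 →
        deriv (fun t : ℝ =>
          θ (Real.cos t • x + Real.sin t • v)
            + Real.arcsin (c₀ * (rad (Real.cos t • x + Real.sin t • v))⁻¹)) 0 = 0 →
        0 < deriv (deriv (fun t : ℝ =>
          θ (Real.cos t • x + Real.sin t • v)
            + Real.arcsin (c₀ * (rad (Real.cos t • x + Real.sin t • v))⁻¹))) 0 := by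
  constructor
  · -- smoothness on K
    intro y hy
    have hyU : y ∈ U := (hK hy).1
    have hrady : c₀ < rad y := hrc y hy
    have hradpos : 0 < rad y := lt_trans hc₀.1 hrady
    have hθy : ContDiffAt ℝ (⊤ : ℕ∞) θ y := hθ.contDiffAt (hUopen.mem_nhds hyU)
    have hq : ContDiffAt ℝ (⊤ : ℕ∞)
        (fun z : EuclideanSpace ℝ (Fin (n+1)) => (z 0) ^ 2 + (z 1) ^ 2) y := by
      have h0 : ContDiff ℝ (⊤ : ℕ∞) (fun z : EuclideanSpace ℝ (Fin (n+1)) => z 0) :=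
        (EuclideanSpace.proj (0 : Fin (n+1)) : EuclideanSpace ℝ (Fin (n+1)) →L[ℝ] ℝ).contDiff
      have h1 : ContDiff ℝ (⊤ : ℕ∞) (fun z : EuclideanSpace ℝ (Fin (n+1)) => z 1) :=
        (EuclideanSpace.proj (1 : Fin (n+1)) : EuclideanSpace ℝ (Fin (n+1)) →L[ℝ] ℝ).contDiff
      exact ((h0.pow 2).add (h1.pow 2)).contDiffAt
    have hqpos : 0 < (y 0) ^ 2 + (y 1) ^ 2 := by
      simpa [rad] using Real.sqrt_pos.mp (by simpa [rad] using hradpos)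
    have hrad : ContDiffAt ℝ (⊤ : ℕ∞) (fun z : EuclideanSpace ℝ (Fin (n+1)) => rad z) y := by
      simp only [rad]
      exact (Real.contDiffAt_sqrt hqpos.ne').comp y hq
    have harg : ContDiffAt ℝ (⊤ : ℕ∞) (fun z : EuclideanSpace ℝ (Fin (n+1)) => c₀ * (rad z)⁻¹) y :=
      contDiffAt_const.mul (hrad.inv hradpos.ne')
    have hlt1 : c₀ * (rad y)⁻¹ < 1 := by
      rw [mul_inv_lt_iff₀ hradpos, one_mul]; exact hrady
    have hpos1 : 0 < c₀ * (rad y)⁻¹ := mul_pos hc₀.1 (inv_pos.mpr hradpos)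
    have harcsin : ContDiffAt ℝ (⊤ : ℕ∞) (fun z : EuclideanSpace ℝ (Fin (n+1)) =>
        Real.arcsin (c₀ * (rad z)⁻¹)) y :=
      ContDiffAt.comp (g := Real.arcsin) y (Real.contDiffAt_arcsin (by linarith) hlt1.ne) harg
    exact (hθy.add harcsin).contDiffWithinAt
  · -- Hessian positivity
    intro x hx v hv hxv
    have hradx : c₀ < rad x := hrc x hx
    have hcoord : ∀ t : ℝ, ∀ i : Fin (n+1),
        (Real.cos t • x + Real.sin t • v) i = Real.cos t * x i + Real.sin t * v i := by
      intro t i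
      simp [PiLp.add_apply, PiLp.smul_apply, smul_eq_mul]
    have hradeq : ∀ t : ℝ, rad (Real.cos t • x + Real.sin t • v)
        = RF (x 0) (v 0) (x 1) (v 1) t := by
      intro t
      simp only [rad, RF, rhoF, aF, hcoord]
    have hfun : (fun t : ℝ => θ (Real.cos t • x + Real.sin t • v)
          + Real.arcsin (c₀ * (rad (Real.cos t • x + Real.sin t • v))⁻¹))
        = fun t => θ (Real.cos t • x + Real.sin t • v)
          + Real.arcsin (c₀ * (RF (x 0) (v 0) (x 1) (v 1) t)⁻¹) := by
      funext t
      rw [hradeq t]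
    rw [hfun]
    intro hcrit
    set S : Set ℝ := {t : ℝ | (Real.cos t • x + Real.sin t • v) ∈ U
        ∧ c₀ ^ 2 < rhoF (x 0) (v 0) (x 1) (v 1) t} with hSdef
    have hγcont : Continuous (fun t : ℝ => Real.cos t • x + Real.sin t • v) :=
      (Real.continuous_cos.smul continuous_const).add
        (Real.continuous_sin.smul continuous_const)
    have hρcont : Continuous (rhoF (x 0) (v 0) (x 1) (v 1)) := by
      unfold rhoF aF
      fun_prop
    have hSo : IsOpen S := by
      rw [hSdef]
      exact (hUopen.preimage hγcont).inter (isOpen_lt continuous_const hρcont)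
    have hγ0 : (Real.cos 0 • x + Real.sin 0 • v) = x := by simp
    have hρ0eq : rhoF (x 0) (v 0) (x 1) (v 1) 0 = (x 0) ^ 2 + (x 1) ^ 2 := by
      simp [rhoF, aF]
    have hradsq : rad x ^ 2 = (x 0) ^ 2 + (x 1) ^ 2 := Real.sq_sqrt (by positivity)
    have h0S : (0 : ℝ) ∈ S := by
      constructor
      · rw [hγ0]; exact (hK hx).1
      · rw [hρ0eq, ← hradsq]
        nlinarith [hc₀.1]
    have hTd : ∀ t ∈ S, DifferentiableAt ℝ
        (fun t => θ (Real.cos t • x + Real.sin t • v)) t := by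
      intro t ht
      have hθd : DifferentiableAt ℝ θ (Real.cos t • x + Real.sin t • v) :=
        (hθ.contDiffAt (hUopen.mem_nhds ht.1)).differentiableAt (by simp)
      have hγd : DifferentiableAt ℝ (fun t : ℝ => Real.cos t • x + Real.sin t • v) t :=
        (Real.differentiable_cos.differentiableAt.smul_const x).add
          (Real.differentiable_sin.differentiableAt.smul_const v)
      exact hθd.comp t hγd
    have hρS : ∀ t ∈ S, c₀ ^ 2 < rhoF (x 0) (v 0) (x 1) (v 1) t := fun t ht => ht.2
    have hpa : ∀ t ∈ S, aF (x 0) (v 0) t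
        = RF (x 0) (v 0) (x 1) (v 1) t
          * Real.cos (θ (Real.cos t • x + Real.sin t • v)) := by
      intro t ht
      have h := (hpolar _ ht.1).1
      rw [hcoord t 0, hradeq t] at h
      rw [← h]
      simp [aF]
    have hpb : ∀ t ∈ S, aF (x 1) (v 1) t
        = RF (x 0) (v 0) (x 1) (v 1) t
          * Real.sin (θ (Real.cos t • x + Real.sin t • v)) := by
      intro t ht
      have h := (hpolar _ ht.1).2
      rw [hcoord t 1, hradeq t] at h
      rw [← h]
      simp [aF]
    exact coreT (x 0) (v 0) (x 1) (v 1) c₀ hc₀.1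
      (fun t => θ (Real.cos t • x + Real.sin t • v)) S hSo h0S hTd hρS hpa hpb hcrit
end

section
/- Let M be a Riemannian manifold, V ⊂ S^n \ S^{n-2} simply connected with generalized longitude function θ and radial function r, and u : M → V a harmonic map. Then Δ(θ∘u) = −2 (r^{-1}∘u) ⟨∇(r∘u), ∇(θ∘u)⟩, and consequently div((r²∘u) ∇(θ∘u)) = 0. -/
open scoped RealInnerProductSpace

/-- Partial derivative of `f : ℝ^m → ℝ` in the `i`-th coordinate direction. -/
noncomputable def pderiv' {m : ℕ} (f : EuclideanSpace ℝ (Fin m) → ℝ) (i : Fin m)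
    (x : EuclideanSpace ℝ (Fin m)) : ℝ :=
  fderiv ℝ f x (EuclideanSpace.single i 1)

/-- Laplace operator on `ℝ^m`. -/
noncomputable def lap' {m : ℕ} (f : EuclideanSpace ℝ (Fin m) → ℝ)
    (x : EuclideanSpace ℝ (Fin m)) : ℝ :=
  ∑ i, pderiv' (pderiv' f i) i x

section aux
variable {m n : ℕ}
  {U : Set (EuclideanSpace ℝ (Fin (n + 1)))}
  {θ : EuclideanSpace ℝ (Fin (n + 1)) → ℝ}
  {Ω : Set (EuclideanSpace ℝ (Fin m))}
  {u : EuclideanSpace ℝ (Fin m) → EuclideanSpace ℝ (Fin (n + 1))}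

theorem key_identity' (hUopen : IsOpen U)
    (hUavoid : ∀ x ∈ U, ¬(x 0 = 0 ∧ x 1 = 0))
    (hθ : ContDiffOn ℝ (⊤ : ℕ∞) θ U)
    (hpolar : ∀ x ∈ U,
      x 0 = rad x * Real.cos (θ x) ∧ x 1 = rad x * Real.sin (θ x))
    (hΩ : IsOpen Ω) (hu : ContDiffOn ℝ (⊤ : ℕ∞) u Ω)
    (huU : ∀ y ∈ Ω, u y ∈ U)
    (z : EuclideanSpace ℝ (Fin m)) (hz : z ∈ Ω) (i : Fin m) :
    ((u z 0) ^ 2 + (u z 1) ^ 2) * pderiv' (fun w => θ (u w)) i z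
      = u z 0 * pderiv' (fun w => u w 1) i z - u z 1 * pderiv' (fun w => u w 0) i z
    ∧ rad (u z) * pderiv' (fun w => rad (u w)) i z
      = u z 0 * pderiv' (fun w => u w 0) i z + u z 1 * pderiv' (fun w => u w 1) i z := by
  simp only [pderiv']
  have hupos : 0 < (u z 0) ^ 2 + (u z 1) ^ 2 := by
    have h := hUavoid (u z) (huU z hz)
    rcases not_and_or.mp h with h0 | h0
    · have := sq_pos_of_ne_zero h0
      nlinarith [sq_nonneg (u z 1)]
    · have := sq_pos_of_ne_zero h0
      nlinarith [sq_nonneg (u z 0)]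
  have huz : ContDiffAt ℝ (⊤ : ℕ∞) u z := hu.contDiffAt (hΩ.mem_nhds hz)
  have ha : ContDiffAt ℝ (⊤ : ℕ∞) (fun w => u w 0) z := by
    exact (EuclideanSpace.proj (0 : Fin (n+1))).contDiff.comp_contDiffAt z huz
  have hb : ContDiffAt ℝ (⊤ : ℕ∞) (fun w => u w 1) z := by
    exact (EuclideanSpace.proj (1 : Fin (n+1))).contDiff.comp_contDiffAt z huz
  have hφ : ContDiffAt ℝ (⊤ : ℕ∞) (fun w => θ (u w)) z :=
    (hθ.contDiffAt (hUopen.mem_nhds (huU z hz))).comp z huz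
  have haD : HasFDerivAt (fun w => u w 0) (fderiv ℝ (fun w => u w 0) z) z :=
    (ha.differentiableAt (by simp)).hasFDerivAt
  have hbD : HasFDerivAt (fun w => u w 1) (fderiv ℝ (fun w => u w 1) z) z :=
    (hb.differentiableAt (by simp)).hasFDerivAt
  have hφD : HasFDerivAt (fun w => θ (u w)) (fderiv ℝ (fun w => θ (u w)) z) z :=
    (hφ.differentiableAt (by simp)).hasFDerivAt
  have hsD : HasFDerivAt (fun w => (u w 0) ^ 2 + (u w 1) ^ 2)
      ((u z 0 • fderiv ℝ (fun w => u w 0) z + u z 0 • fderiv ℝ (fun w => u w 0) z)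
        + (u z 1 • fderiv ℝ (fun w => u w 1) z + u z 1 • fderiv ℝ (fun w => u w 1) z)) z := by
    have := ((haD.mul haD).add (hbD.mul hbD))
    have h2 : (fun w => (u w 0) ^ 2 + (u w 1) ^ 2) = (((fun w => u w 0) * fun w => u w 0)
        + (fun w => u w 1) * fun w => u w 1) := by funext w; simp [pow_two]
    rw [h2]; exact this
  have hsne : (u z 0) ^ 2 + (u z 1) ^ 2 ≠ 0 := ne_of_gt hupos
  have hρD : HasFDerivAt (fun w => rad (u w))
      ((1 / (2 * Real.sqrt ((u z 0) ^ 2 + (u z 1) ^ 2))) •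
        ((u z 0 • fderiv ℝ (fun w => u w 0) z + u z 0 • fderiv ℝ (fun w => u w 0) z)
        + (u z 1 • fderiv ℝ (fun w => u w 1) z + u z 1 • fderiv ℝ (fun w => u w 1) z))) z :=
    (Real.hasDerivAt_sqrt hsne).comp_hasFDerivAt z hsD
  set Dρ := fderiv ℝ (fun w => rad (u w)) z with hDρ
  have hρD' : HasFDerivAt (fun w => rad (u w)) Dρ z := (hρD.differentiableAt).hasFDerivAt
  have hDρeq := hρD'.unique hρD
  set Φ := θ (u z) with hΦ
  set Dφ := fderiv ℝ (fun w => θ (u w)) z with hDφ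
  have hcosD : HasFDerivAt (fun w => Real.cos (θ (u w))) ((-Real.sin Φ) • Dφ) z :=
    HasDerivAt.comp_hasFDerivAt (h₂ := Real.cos) z (Real.hasDerivAt_cos Φ) hφD
  have hsinD : HasFDerivAt (fun w => Real.sin (θ (u w))) ((Real.cos Φ) • Dφ) z :=
    HasDerivAt.comp_hasFDerivAt (h₂ := Real.sin) z (Real.hasDerivAt_sin Φ) hφD
  have hmem : Ω ∈ nhds z := hΩ.mem_nhds hz
  have haeq : (fun w => u w 0) =ᶠ[nhds z] fun w => rad (u w) * Real.cos (θ (u w)) :=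
    Filter.eventuallyEq_of_mem hmem fun w hw => (hpolar (u w) (huU w hw)).1
  have hbeq : (fun w => u w 1) =ᶠ[nhds z] fun w => rad (u w) * Real.sin (θ (u w)) :=
    Filter.eventuallyEq_of_mem hmem fun w hw => (hpolar (u w) (huU w hw)).2
  have haD2 : HasFDerivAt (fun w => u w 0)
      (rad (u z) • ((-Real.sin Φ) • Dφ) + Real.cos Φ • Dρ) z :=
    (hρD'.mul hcosD).congr_of_eventuallyEq haeq
  have hbD2 : HasFDerivAt (fun w => u w 1)
      (rad (u z) • ((Real.cos Φ) • Dφ) + Real.sin Φ • Dρ) z :=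
    (hρD'.mul hsinD).congr_of_eventuallyEq hbeq
  have hau := haD.unique haD2
  have hbu := hbD.unique hbD2
  set R := rad (u z) with hR
  have hRdef : Real.sqrt ((u z 0) ^ 2 + (u z 1) ^ 2) = R := rfl
  have hRsq : R ^ 2 = (u z 0) ^ 2 + (u z 1) ^ 2 := Real.sq_sqrt (le_of_lt hupos)
  have hRpos : 0 < R := by rw [← hRdef]; exact Real.sqrt_pos.mpr hupos
  set dA := fderiv ℝ (fun w => u w 0) z (EuclideanSpace.single i 1) with hdA
  set dB := fderiv ℝ (fun w => u w 1) z (EuclideanSpace.single i 1) with hdB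
  have hA : u z 0 = R * Real.cos Φ := (hpolar (u z) (huU z hz)).1
  have hB : u z 1 = R * Real.sin Φ := (hpolar (u z) (huU z hz)).2
  have edA : dA = R * (-Real.sin Φ * Dφ (EuclideanSpace.single i 1))
      + Real.cos Φ * Dρ (EuclideanSpace.single i 1) := by
    rw [hdA, hau]; simp [smul_eq_mul]
  have edB : dB = R * (Real.cos Φ * Dφ (EuclideanSpace.single i 1))
      + Real.sin Φ * Dρ (EuclideanSpace.single i 1) := by
    rw [hdB, hbu]; simp [smul_eq_mul]
  have edR : Dρ (EuclideanSpace.single i 1)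
      = (1 / (2 * R)) * (2 * (u z 0) * dA + 2 * (u z 1) * dB) := by
    rw [hDρeq]; simp only [ContinuousLinearMap.smul_apply, ContinuousLinearMap.add_apply,
      smul_eq_mul, hRdef]
    rw [← hdA, ← hdB]; ring
  have hpyth := Real.sin_sq_add_cos_sq Φ
  constructor
  · rw [← hRsq, hA, hB, edA, edB]
    linear_combination (-(R^2 * Dφ (EuclideanSpace.single i 1))) * hpyth
  · rw [edR]
    field_simp
end aux

/-- Let `V = U ∩ S^n` be a simply connected subset of `S^n \ S^{n-2}` with
generalized longitude function `θ` and radial function `r`, and let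
`u : Ω → V ⊂ S^n` be a harmonic map (here `Ω ⊆ ℝ^m` open and harmonicity of the
sphere-valued map is the tension-field equation `Δu = -|du|² u`).  Then
`Δ(θ∘u) = -2 (r⁻¹∘u) ⟨∇(r∘u), ∇(θ∘u)⟩` and consequently
`div((r²∘u) ∇(θ∘u)) = 0`. -/


theorem stmt11 {m n : ℕ} (hn : 1 ≤ n)
    (U : Set (EuclideanSpace ℝ (Fin (n + 1)))) (hUopen : IsOpen U)
    (hUavoid : ∀ x ∈ U, ¬(x 0 = 0 ∧ x 1 = 0))
    (hsc : SimplyConnectedSpace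
      ↥(U ∩ Metric.sphere (0 : EuclideanSpace ℝ (Fin (n + 1))) 1))
    (θ : EuclideanSpace ℝ (Fin (n + 1)) → ℝ) (hθ : ContDiffOn ℝ (⊤ : ℕ∞) θ U)
    (hpolar : ∀ x ∈ U,
      x 0 = rad x * Real.cos (θ x) ∧ x 1 = rad x * Real.sin (θ x))
    (Ω : Set (EuclideanSpace ℝ (Fin m))) (hΩ : IsOpen Ω)
    (u : EuclideanSpace ℝ (Fin m) → EuclideanSpace ℝ (Fin (n + 1)))
    (hu : ContDiffOn ℝ (⊤ : ℕ∞) u Ω)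
    (huV : ∀ y ∈ Ω,
      u y ∈ U ∩ Metric.sphere (0 : EuclideanSpace ℝ (Fin (n + 1))) 1)
    (hharmonic : ∀ y ∈ Ω, ∀ j : Fin (n + 1),
      lap' (fun z => u z j) y
        = -(∑ i, ∑ j', (pderiv' (fun z => u z j') i y) ^ 2) * u y j) :
    ∀ y ∈ Ω,
      lap' (fun z => θ (u z)) y
        = -2 * (rad (u y))⁻¹ *
            ∑ i, pderiv' (fun z => rad (u z)) i y * pderiv' (fun z => θ (u z)) i y
      ∧ ∑ i, pderiv'
            (fun z => (rad (u z)) ^ 2 * pderiv' (fun z' => θ (u z')) i z) i y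
          = 0 := by
  intro y hy
  have huU : ∀ z ∈ Ω, u z ∈ U := fun z hz => (huV z hz).1
  have key := fun z (hz : z ∈ Ω) (i : Fin m) =>
    key_identity' hUopen hUavoid hθ hpolar hΩ hu huU z hz i
  have hmem : Ω ∈ nhds y := hΩ.mem_nhds hy
  have huy : ContDiffAt ℝ (⊤ : ℕ∞) u y := hu.contDiffAt hmem
  have ha : ContDiffAt ℝ (⊤ : ℕ∞) (fun w => u w 0) y := by
    exact (EuclideanSpace.proj (0 : Fin (n+1))).contDiff.comp_contDiffAt y huy
  have hb : ContDiffAt ℝ (⊤ : ℕ∞) (fun w => u w 1) y := by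
    exact (EuclideanSpace.proj (1 : Fin (n+1))).contDiff.comp_contDiffAt y huy
  have hφ : ContDiffAt ℝ (⊤ : ℕ∞) (fun w => θ (u w)) y :=
    (hθ.contDiffAt (hUopen.mem_nhds (huU y hy))).comp y huy
  have hupos : 0 < (u y 0) ^ 2 + (u y 1) ^ 2 := by
    have h := hUavoid (u y) (huU y hy)
    rcases not_and_or.mp h with h0 | h0
    · have := sq_pos_of_ne_zero h0
      nlinarith [sq_nonneg (u y 1)]
    · have := sq_pos_of_ne_zero h0
      nlinarith [sq_nonneg (u y 0)]
  -- abbreviations (scalars)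
  set A := u y 0 with hA
  set B := u y 1 with hB
  set R := rad (u y) with hR
  have hRpos : 0 < R := Real.sqrt_pos.mpr hupos
  have hRsq : R ^ 2 = A ^ 2 + B ^ 2 := Real.sq_sqrt (le_of_lt hupos)
  -- first derivatives at y
  set dA := fun i => pderiv' (fun w => u w 0) i y with hdA
  set dB := fun i => pderiv' (fun w => u w 1) i y with hdB
  set dφ := fun i => pderiv' (fun w => θ (u w)) i y with hdφ
  set dR := fun i => pderiv' (fun w => rad (u w)) i y with hdR
  -- HasFDerivAt bundles at y
  have haD : HasFDerivAt (fun w => u w 0) (fderiv ℝ (fun w => u w 0) y) y :=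
    (ha.differentiableAt (by simp)).hasFDerivAt
  have hbD : HasFDerivAt (fun w => u w 1) (fderiv ℝ (fun w => u w 1) y) y :=
    (hb.differentiableAt (by simp)).hasFDerivAt
  have hsD : HasFDerivAt (fun w => (u w 0) ^ 2 + (u w 1) ^ 2)
      ((A • fderiv ℝ (fun w => u w 0) y + A • fderiv ℝ (fun w => u w 0) y)
        + (B • fderiv ℝ (fun w => u w 1) y + B • fderiv ℝ (fun w => u w 1) y)) y := by
    have := ((haD.mul haD).add (hbD.mul hbD))
    have h2 : (fun w => (u w 0) ^ 2 + (u w 1) ^ 2) = (((fun w => u w 0) * fun w => u w 0)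
        + (fun w => u w 1) * fun w => u w 1) := by funext w; simp [pow_two]
    rw [h2]; exact this
  -- first-derivative functions are smooth at y
  have hdaC : ∀ i, ContDiffAt ℝ (⊤ : ℕ∞) (fun w => pderiv' (fun w' => u w' 0) i w) y := fun i => by
    exact (ha.fderiv_right (by simp)).clm_apply contDiffAt_const
  have hdbC : ∀ i, ContDiffAt ℝ (⊤ : ℕ∞) (fun w => pderiv' (fun w' => u w' 1) i w) y := fun i => by
    exact (hb.fderiv_right (by simp)).clm_apply contDiffAt_const
  have hdφC : ∀ i, ContDiffAt ℝ (⊤ : ℕ∞) (fun w => pderiv' (fun w' => θ (u w')) i w) y := fun i => by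
    exact (hφ.fderiv_right (by simp)).clm_apply contDiffAt_const
  have hdaD : ∀ i, HasFDerivAt (fun w => pderiv' (fun w' => u w' 0) i w)
      (fderiv ℝ (fun w => pderiv' (fun w' => u w' 0) i w) y) y := fun i =>
    (((hdaC i).differentiableAt (by simp))).hasFDerivAt
  have hdbD : ∀ i, HasFDerivAt (fun w => pderiv' (fun w' => u w' 1) i w)
      (fderiv ℝ (fun w => pderiv' (fun w' => u w' 1) i w) y) y := fun i =>
    (((hdbC i).differentiableAt (by simp))).hasFDerivAt
  have hdφD : ∀ i, HasFDerivAt (fun w => pderiv' (fun w' => θ (u w')) i w)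
      (fderiv ℝ (fun w => pderiv' (fun w' => θ (u w')) i w) y) y := fun i =>
    (((hdφC i).differentiableAt (by simp))).hasFDerivAt
  -- second derivatives
  set dda := fun i => pderiv' (fun w => pderiv' (fun w' => u w' 0) i w) i y with hdda
  set ddb := fun i => pderiv' (fun w => pderiv' (fun w' => u w' 1) i w) i y with hddb
  set ddφ := fun i => pderiv' (fun w => pderiv' (fun w' => θ (u w')) i w) i y with hddφ
  -- derivative of the right-hand side h i
  have eh : ∀ i, pderiv' (fun w => u w 0 * pderiv' (fun w' => u w' 1) i w
        - u w 1 * pderiv' (fun w' => u w' 0) i w) i y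
      = A * ddb i - B * dda i := by
    intro i
    have h1 := ((haD.mul (hdbD i)).sub (hbD.mul (hdaD i))).fderiv
    simp only [pderiv'] at h1 ⊢
    erw [h1]
    simp only [ContinuousLinearMap.sub_apply, ContinuousLinearMap.add_apply,
      ContinuousLinearMap.smul_apply, smul_eq_mul]
    simp only [hdda, hddb, hdA, hdB, pderiv']
    ring
  -- derivative of the left-hand side g i
  have eg : ∀ i, pderiv' (fun w => ((u w 0) ^ 2 + (u w 1) ^ 2)
        * pderiv' (fun w' => θ (u w')) i w) i y
      = (2 * A * dA i + 2 * B * dB i) * dφ i + (A ^ 2 + B ^ 2) * ddφ i := by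
    intro i
    have h1 := (hsD.mul (hdφD i)).fderiv
    simp only [pderiv'] at h1 ⊢
    erw [h1]
    simp only [ContinuousLinearMap.add_apply, ContinuousLinearMap.smul_apply, smul_eq_mul]
    simp only [hddφ, hdA, hdB, hdφ, pderiv']
    ring
  -- eventual equality of g i and h i
  have egh : ∀ i, pderiv' (fun w => ((u w 0) ^ 2 + (u w 1) ^ 2)
        * pderiv' (fun w' => θ (u w')) i w) i y
      = pderiv' (fun w => u w 0 * pderiv' (fun w' => u w' 1) i w
        - u w 1 * pderiv' (fun w' => u w' 0) i w) i y := by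
    intro i
    have heq : (fun w => ((u w 0) ^ 2 + (u w 1) ^ 2) * pderiv' (fun w' => θ (u w')) i w)
        =ᶠ[nhds y] (fun w => u w 0 * pderiv' (fun w' => u w' 1) i w
          - u w 1 * pderiv' (fun w' => u w' 0) i w) :=
      Filter.eventuallyEq_of_mem hmem fun w hw => (key w hw i).1
    exact congrArg (fun L : EuclideanSpace ℝ (Fin m) →L[ℝ] ℝ => L (EuclideanSpace.single i 1))
      (Filter.EventuallyEq.fderiv_eq (𝕜 := ℝ) heq)
  -- harmonicity in components 0 and 1
  have hh0 := hharmonic y hy 0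
  have hh1 := hharmonic y hy 1
  set K := ∑ i, ∑ j', (pderiv' (fun z => u z j') i y) ^ 2 with hK
  simp only [lap'] at hh0 hh1
  -- the master sum identity
  have master : ∑ i, ((2 * A * dA i + 2 * B * dB i) * dφ i)
      + (A ^ 2 + B ^ 2) * ∑ i, ddφ i = 0 := by
    have e1 : ∑ i, ((2 * A * dA i + 2 * B * dB i) * dφ i + (A ^ 2 + B ^ 2) * ddφ i)
        = ∑ i, (A * ddb i - B * dda i) := by
      refine Finset.sum_congr rfl fun i _ => ?_
      rw [← eg i, ← eh i, egh i]
    rw [Finset.sum_add_distrib, ← Finset.mul_sum] at e1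
    rw [e1, Finset.sum_sub_distrib, ← Finset.mul_sum, ← Finset.mul_sum]
    have s0 : ∑ i, dda i = -K * A := hh0
    have s1 : ∑ i, ddb i = -K * B := hh1
    rw [s0, s1]; ring
  -- the radial derivative identity at y
  have keyR : ∀ i, R * dR i = A * dA i + B * dB i := fun i => (key y hy i).2
  constructor
  · -- first claim
    simp only [lap']
    have hS : ∑ i, dR i * dφ i = R⁻¹ * ∑ i, ((A * dA i + B * dB i) * dφ i) := by
      rw [Finset.mul_sum]
      refine Finset.sum_congr rfl fun i _ => ?_
      have := keyR i
      field_simp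
      linear_combination dφ i * this
    rw [hS]
    have h2 : ∑ i, ((2 * A * dA i + 2 * B * dB i) * dφ i)
        = 2 * ∑ i, ((A * dA i + B * dB i) * dφ i) := by
      rw [Finset.mul_sum]
      exact Finset.sum_congr rfl fun i _ => by ring
    rw [h2] at master
    rw [← hRsq] at master
    have hRne : R ≠ 0 := ne_of_gt hRpos
    field_simp
    linear_combination master
  · -- second claim
    have hrw : ∀ i, (fun z => (rad (u z)) ^ 2 * pderiv' (fun z' => θ (u z')) i z)
        = fun z => ((u z 0) ^ 2 + (u z 1) ^ 2) * pderiv' (fun z' => θ (u z')) i z := by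
      intro i
      funext z
      have : (rad (u z)) ^ 2 = (u z 0) ^ 2 + (u z 1) ^ 2 :=
        Real.sq_sqrt (by positivity)
      rw [this]
    have : ∑ i, pderiv' (fun z => (rad (u z)) ^ 2 * pderiv' (fun z' => θ (u z')) i z) i y
        = ∑ i, ((2 * A * dA i + 2 * B * dB i) * dφ i + (A ^ 2 + B ^ 2) * ddφ i) := by
      refine Finset.sum_congr rfl fun i _ => ?_
      rw [hrw i, eg i]
    rw [this, Finset.sum_add_distrib, ← Finset.mul_sum]
    exact master
end

section
/- Let V be an open connected convex supporting subset of S^n containing both the open upper hemisphere S^n_+ = {x : ⟨x, e₁⟩ > 0} and the open lower hemisphere S^n_− = {x : ⟨x, e₁⟩ < 0}. Then, for a suitable choice of orthonormal frame, V ⊂ S^n \ \bar{S}^{n-1}_+, i.e., V is disjoint from the closed half-equator {x ∈ S^n : ⟨x, e₁⟩ = 0, ⟨x, e₂⟩ ≥ 0}. -/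
open scoped RealInnerProductSpace
open Real Set

section aux

variable {E : Type*} [NormedAddCommGroup E] [InnerProductSpace ℝ E]

lemma inner_combo19 {e a : E} (he : ‖e‖ = 1) (ha : ‖a‖ = 1) (hea : ⟪e, a⟫ = 0)
    (p q r u : ℝ) : ⟪p • e + q • a, r • e + u • a⟫ = p * r + q * u := by
  rw [inner_add_left, inner_add_right, inner_add_right, real_inner_smul_left,
    real_inner_smul_left, real_inner_smul_left, real_inner_smul_left,
    real_inner_smul_right, real_inner_smul_right, real_inner_smul_right,
    real_inner_smul_right, real_inner_self_eq_norm_mul_norm,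
    real_inner_self_eq_norm_mul_norm, he, ha]
  have h' : (inner ℝ a e : ℝ) = 0 := by rw [real_inner_comm]; exact hea
  simp only [hea, h']
  ring

lemma norm_combo19 {e a : E} (he : ‖e‖ = 1) (ha : ‖a‖ = 1) (hea : ⟪e, a⟫ = 0)
    {p q : ℝ} (hpq : p ^ 2 + q ^ 2 = 1) : ‖p • e + q • a‖ = 1 := by
  have h := inner_combo19 he ha hea p q p q
  rw [real_inner_self_eq_norm_mul_norm] at h
  have h2 : ‖p • e + q • a‖ * ‖p • e + q • a‖ = 1 := by nlinarith
  rcases mul_self_eq_one_iff.mp h2 with h3 | h3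
  · exact h3
  · nlinarith [norm_nonneg (p • e + q • a)]

lemma deriv2_shift19 (g : ℝ → ℝ) (t : ℝ) :
    deriv (deriv (fun s => g (t + s))) 0 = deriv (deriv g) t := by
  have h1 : (deriv fun s => g (t + s)) = fun s => deriv g (t + s) :=
    funext fun s => deriv_comp_const_add g t s
  rw [h1]
  simpa using deriv_comp_const_add (deriv g) t 0

end aux

lemma core19 {E : Type*} [NormedAddCommGroup E] [InnerProductSpace ℝ E]
    (V : Set E) (e₁ : E) (he₁ : ‖e₁‖ = 1)
    (hconvsupp : ∀ K ⊆ V, IsCompact K →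
      ∃ (F : E → ℝ) (W : Set E), IsOpen W ∧ K ⊆ W ∧ ContDiffOn ℝ (⊤ : ℕ∞) F W ∧
        ∀ x ∈ K, ∀ v : E, ‖v‖ = 1 → ⟪x, v⟫ = 0 →
          0 < deriv (deriv (fun t : ℝ => F (Real.cos t • x + Real.sin t • v))) 0)
    {ι : Type*} (s : Finset ι) (a : ι → E) (w : ι → ℝ)
    (ha1 : ∀ i ∈ s, ‖a i‖ = 1) (hae : ∀ i ∈ s, ⟪e₁, a i⟫ = 0)
    (hseg : ∀ i ∈ s, ∀ t ∈ Icc (0:ℝ) π, Real.cos t • e₁ + Real.sin t • a i ∈ V)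
    (hw0 : ∀ i ∈ s, 0 ≤ w i) (hw1 : ∑ i ∈ s, w i = 1)
    (hsum : ∑ i ∈ s, w i • a i = 0) : False := by
  classical
  set c : ι → ℝ → E := fun i t => Real.cos t • e₁ + Real.sin t • a i with hc
  set K : Set E := ⋃ i ∈ (s : Set ι), c i '' Icc (0:ℝ) π with hK
  have hccont : ∀ i : ι, Continuous (c i) := fun i =>
    (Real.continuous_cos.smul continuous_const).add (Real.continuous_sin.smul continuous_const)
  have hKcomp : IsCompact K :=
    s.finite_toSet.isCompact_biUnion (fun i _ => isCompact_Icc.image (hccont i))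
  have hKV : K ⊆ V := by
    intro x hx
    simp only [hK, mem_iUnion, mem_image] at hx
    obtain ⟨i, hi, t, ht, rfl⟩ := hx
    exact hseg i hi t ht
  obtain ⟨F, W, hWopen, hKW, hF, hpos⟩ := hconvsupp K hKV hKcomp
  -- facts per index
  have key : ∀ i ∈ s, fderiv ℝ F e₁ (a i) < - fderiv ℝ F (-e₁) (a i) := by
    intro i hi
    set g : ℝ → ℝ := fun t => F (c i t) with hg
    have hmemK : ∀ t ∈ Icc (0:ℝ) π, c i t ∈ K := by
      intro t ht
      simp only [hK, mem_iUnion, mem_image]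
      exact ⟨i, hi, t, ht, rfl⟩
    set U : Set ℝ := c i ⁻¹' W with hU
    have hUopen : IsOpen U := hWopen.preimage (hccont i)
    have hIccU : Icc (0:ℝ) π ⊆ U := fun t ht => hKW (hmemK t ht)
    have hcsmooth : ContDiff ℝ (⊤ : ℕ∞) (c i) :=
      (Real.contDiff_cos.smul contDiff_const).add (Real.contDiff_sin.smul contDiff_const)
    have hgsmooth : ContDiffOn ℝ (⊤ : ℕ∞) g U :=
      hF.comp hcsmooth.contDiffOn (fun t ht => ht)
    have hcderiv : ∀ t : ℝ, HasDerivAt (c i) (-Real.sin t • e₁ + Real.cos t • a i) t :=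
      fun t => ((Real.hasDerivAt_cos t).smul_const e₁).add ((Real.hasDerivAt_sin t).smul_const (a i))
    have hgderiv : ∀ t : ℝ, c i t ∈ W →
        deriv g t = fderiv ℝ F (c i t) (-Real.sin t • e₁ + Real.cos t • a i) := by
      intro t ht
      have hFd : DifferentiableAt ℝ F (c i t) :=
        (hF.contDiffAt (hWopen.mem_nhds ht)).differentiableAt (by simp)
      exact (hFd.hasFDerivAt.comp_hasDerivAt t (hcderiv t)).deriv
    have hposg : ∀ t ∈ Icc (0:ℝ) π, 0 < deriv (deriv g) t := by
      intro t ht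
      have hv1 : ‖-Real.sin t • e₁ + Real.cos t • a i‖ = 1 := by
        apply norm_combo19 he₁ (ha1 i hi) (hae i hi)
        nlinarith [Real.sin_sq_add_cos_sq t]
      have hx1 : ⟪c i t, -Real.sin t • e₁ + Real.cos t • a i⟫ = 0 := by
        rw [hc]
        rw [inner_combo19 he₁ (ha1 i hi) (hae i hi)]
        ring
      have hp := hpos (c i t) (hmemK t ht) _ hv1 hx1
      have heq : (fun u : ℝ => F (Real.cos u • (c i t) + Real.sin u •
          (-Real.sin t • e₁ + Real.cos t • a i))) = fun u => g (t + u) := by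
        funext u
        have : Real.cos u • (c i t) + Real.sin u • (-Real.sin t • e₁ + Real.cos t • a i)
            = c i (t + u) := by
          simp only [hc, Real.cos_add, Real.sin_add]
          module
        rw [this]
      rw [heq, deriv2_shift19] at hp
      exact hp
    have hcont : ContinuousOn (deriv g) U :=
      (ContDiffOn.deriv_of_isOpen (m := (⊤ : ℕ∞)) hgsmooth hUopen (by simp)).continuousOn
    have hmono : StrictMonoOn (deriv g) (Icc (0:ℝ) π) := by
      apply strictMonoOn_of_deriv_pos (convex_Icc 0 π) (hcont.mono hIccU)
      intro t ht
      exact hposg t (interior_subset ht)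
    have hlt : deriv g 0 < deriv g π :=
      hmono (left_mem_Icc.2 (le_of_lt Real.pi_pos)) (right_mem_Icc.2 (le_of_lt Real.pi_pos))
        Real.pi_pos
    have hc0 : c i 0 = e₁ := by simp [hc]
    have hcπ : c i π = -e₁ := by simp [hc]
    have hd0 : deriv g 0 = fderiv ℝ F e₁ (a i) := by
      rw [hgderiv 0 (hKW (hmemK 0 (left_mem_Icc.2 (le_of_lt Real.pi_pos)))), hc0]
      simp
    have hdπ : deriv g π = - fderiv ℝ F (-e₁) (a i) := by
      rw [hgderiv π (hKW (hmemK π (right_mem_Icc.2 (le_of_lt Real.pi_pos)))), hcπ]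
      simp
    rw [hd0, hdπ] at hlt
    exact hlt
  -- sum up
  have h1 : ∑ i ∈ s, w i * fderiv ℝ F e₁ (a i) = 0 := by
    have : ∑ i ∈ s, w i * fderiv ℝ F e₁ (a i) = fderiv ℝ F e₁ (∑ i ∈ s, w i • a i) := by
      rw [map_sum]
      exact Finset.sum_congr rfl fun i _ => by rw [ContinuousLinearMap.map_smul]; rfl
    rw [this, hsum, map_zero]
  have h2 : ∑ i ∈ s, w i * fderiv ℝ F (-e₁) (a i) = 0 := by
    have : ∑ i ∈ s, w i * fderiv ℝ F (-e₁) (a i) = fderiv ℝ F (-e₁) (∑ i ∈ s, w i • a i) := by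
      rw [map_sum]
      exact Finset.sum_congr rfl fun i _ => by rw [ContinuousLinearMap.map_smul]; rfl
    rw [this, hsum, map_zero]
  have hex : ∃ i ∈ s, 0 < w i := by
    by_contra hcon
    push_neg at hcon
    have : ∑ i ∈ s, w i = 0 :=
      Finset.sum_eq_zero fun i hi => le_antisymm (hcon i hi) (hw0 i hi)
    rw [hw1] at this
    norm_num at this
  have hpos' : 0 < ∑ i ∈ s, w i * (-fderiv ℝ F (-e₁) (a i) - fderiv ℝ F e₁ (a i)) := by
    apply Finset.sum_pos'
    · intro i hi
      exact mul_nonneg (hw0 i hi) (by linarith [key i hi])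
    · obtain ⟨i, hi, hwi⟩ := hex
      exact ⟨i, hi, mul_pos hwi (by linarith [key i hi])⟩
  have hzero : ∑ i ∈ s, w i * (-fderiv ℝ F (-e₁) (a i) - fderiv ℝ F e₁ (a i)) = 0 := by
    have : ∀ i ∈ s, w i * (-fderiv ℝ F (-e₁) (a i) - fderiv ℝ F e₁ (a i)) =
        -(w i * fderiv ℝ F (-e₁) (a i)) - w i * fderiv ℝ F e₁ (a i) := fun i _ => by ring
    rw [Finset.sum_congr rfl this, Finset.sum_sub_distrib, Finset.sum_neg_distrib, h1, h2]
    ring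
  rw [hzero] at hpos'
  exact lt_irrefl 0 hpos'

lemma seg19 {E : Type*} [NormedAddCommGroup E] [InnerProductSpace ℝ E]
    (V : Set E) (e₁ : E) (he₁ : ‖e₁‖ = 1)
    (hup : ∀ x : E, ‖x‖ = 1 → 0 < ⟪x, e₁⟫ → x ∈ V)
    (hlo : ∀ x : E, ‖x‖ = 1 → ⟪x, e₁⟫ < 0 → x ∈ V)
    {a : E} (haV : a ∈ V) (ha1 : ‖a‖ = 1) (hae : ⟪e₁, a⟫ = 0) :
    ∀ t ∈ Icc (0:ℝ) π, Real.cos t • e₁ + Real.sin t • a ∈ V := by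
  intro t ht
  have hx1 : ‖Real.cos t • e₁ + Real.sin t • a‖ = 1 :=
    norm_combo19 he₁ ha1 hae (by nlinarith [Real.sin_sq_add_cos_sq t])
  have hxe : ⟪Real.cos t • e₁ + Real.sin t • a, e₁⟫ = Real.cos t := by
    have h := inner_combo19 he₁ ha1 hae (Real.cos t) (Real.sin t) 1 0
    simpa using h
  rcases lt_trichotomy (Real.cos t) 0 with h | h | h
  · exact hlo _ hx1 (by rw [hxe]; exact h)
  · have hs : Real.sin t = 1 := by
      have hsn : 0 ≤ Real.sin t := Real.sin_nonneg_of_nonneg_of_le_pi ht.1 ht.2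
      have h2 : (Real.sin t - 1) * (Real.sin t + 1) = 0 := by
        nlinarith [Real.sin_sq_add_cos_sq t]
      rcases mul_eq_zero.mp h2 with h3 | h3 <;> linarith
    have : Real.cos t • e₁ + Real.sin t • a = a := by rw [h, hs]; simp
    rw [this]; exact haV
  · exact hup _ hx1 (by rw [hxe]; exact h)

/-- Let `V` be an open (in `S^n`) connected convex supporting subset of `S^n`
containing both the open upper hemisphere `{⟨x,e₁⟩ > 0}` and the open lower
hemisphere `{⟨x,e₁⟩ < 0}`.  ("Convex supporting" means: every compact `K ⊆ V`
admits a function, smooth on an ambient open neighborhood of `K`, whose round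
Hessian — computed as the second derivative along great-circle geodesics with
unit initial velocity — is positive definite at every point of `K`.)  Then, for a
suitable unit vector `e₂` orthogonal to `e₁`, `V` is disjoint from the closed
half-equator `{x ∈ S^n : ⟨x,e₁⟩ = 0, ⟨x,e₂⟩ ≥ 0}`, i.e.
`V ⊆ S^n \ \bar{S}^{n-1}_+`. -/
theorem stmt19 {n : ℕ} (hn : 1 ≤ n)
    (V : Set (EuclideanSpace ℝ (Fin (n + 1))))
    (hVsub : V ⊆ Metric.sphere (0 : EuclideanSpace ℝ (Fin (n + 1))) 1)
    (hVopen : IsOpen (Subtype.val ⁻¹' V :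
      Set (Metric.sphere (0 : EuclideanSpace ℝ (Fin (n + 1))) 1)))
    (hVconn : IsConnected V)
    (e₁ : EuclideanSpace ℝ (Fin (n + 1))) (he₁ : ‖e₁‖ = 1)
    (hupper : {x : EuclideanSpace ℝ (Fin (n + 1)) |
      x ∈ Metric.sphere (0 : EuclideanSpace ℝ (Fin (n + 1))) 1 ∧ 0 < ⟪x, e₁⟫} ⊆ V)
    (hlower : {x : EuclideanSpace ℝ (Fin (n + 1)) |
      x ∈ Metric.sphere (0 : EuclideanSpace ℝ (Fin (n + 1))) 1 ∧ ⟪x, e₁⟫ < 0} ⊆ V)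
    (hconvsupp : ∀ K ⊆ V, IsCompact K →
      ∃ (F : EuclideanSpace ℝ (Fin (n + 1)) → ℝ)
        (W : Set (EuclideanSpace ℝ (Fin (n + 1)))),
        IsOpen W ∧ K ⊆ W ∧ ContDiffOn ℝ (⊤ : ℕ∞) F W ∧
        ∀ x ∈ K, ∀ v : EuclideanSpace ℝ (Fin (n + 1)),
          ‖v‖ = 1 → ⟪x, v⟫ = 0 →
          0 < deriv (deriv (fun t : ℝ =>
                F (Real.cos t • x + Real.sin t • v))) 0) :
    ∃ e₂ : EuclideanSpace ℝ (Fin (n + 1)), ‖e₂‖ = 1 ∧ ⟪e₁, e₂⟫ = 0 ∧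
      ∀ x ∈ V, ⟪x, e₁⟫ = 0 → ⟪x, e₂⟫ < 0 := by
  classical
  have he₁0 : e₁ ≠ 0 := by
    intro h; rw [h, norm_zero] at he₁; norm_num at he₁
  have hup : ∀ x : (EuclideanSpace ℝ (Fin (n + 1))), ‖x‖ = 1 → 0 < ⟪x, e₁⟫ → x ∈ V := fun x h1 h2 =>
    hupper ⟨mem_sphere_zero_iff_norm.2 h1, h2⟩
  have hlo : ∀ x : (EuclideanSpace ℝ (Fin (n + 1))), ‖x‖ = 1 → ⟪x, e₁⟫ < 0 → x ∈ V := fun x h1 h2 =>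
    hlower ⟨mem_sphere_zero_iff_norm.2 h1, h2⟩
  by_cases hA : ∃ a : (EuclideanSpace ℝ (Fin (n + 1))), a ∈ V ∧ ⟪a, e₁⟫ = 0
  swap
  · -- V misses the whole equator; any unit vector orthogonal to e₁ works
    push_neg at hA
    have hbot : (ℝ ∙ e₁)ᗮ ≠ ⊥ := by
      intro h
      rw [Submodule.orthogonal_eq_bot_iff] at h
      have h1 : Module.finrank ℝ (ℝ ∙ e₁) = Module.finrank ℝ (EuclideanSpace ℝ (Fin (n + 1))) := by
        rw [h]; exact finrank_top ℝ (EuclideanSpace ℝ (Fin (n + 1)))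
      rw [finrank_span_singleton he₁0] at h1
      have h2 : Module.finrank ℝ (EuclideanSpace ℝ (Fin (n + 1))) = n + 1 := finrank_euclideanSpace_fin
      omega
    obtain ⟨u, huo, hu0⟩ := Submodule.exists_mem_ne_zero_of_ne_bot hbot
    have hinner : ⟪e₁, u⟫ = 0 :=
      (Submodule.mem_orthogonal _ u).1 huo e₁ (Submodule.mem_span_singleton_self e₁)
    refine ⟨‖u‖⁻¹ • u, ?_, ?_, ?_⟩
    · rw [norm_smul, norm_inv, norm_norm, inv_mul_cancel₀ (norm_ne_zero_iff.2 hu0)]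
    · rw [real_inner_smul_right, hinner, mul_zero]
    · intro x hx hxe
      exact absurd hxe (hA x hx)
  obtain ⟨a₀, ha₀V, ha₀e⟩ := hA
  -- open ambient set U with V = U ∩ sphere
  obtain ⟨U, hUopen, hUp⟩ := isOpen_induced_iff.mp hVopen
  have hVU : V = U ∩ Metric.sphere (0 : (EuclideanSpace ℝ (Fin (n + 1)))) 1 := by
    ext x
    constructor
    · intro hx
      have hxs := hVsub hx
      have hmem : (⟨x, hxs⟩ : Metric.sphere (0 : (EuclideanSpace ℝ (Fin (n + 1)))) 1) ∈ Subtype.val ⁻¹' U := by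
        rw [hUp]; exact hx
      exact ⟨hmem, hxs⟩
    · rintro ⟨hxU, hxs⟩
      have hmem : (⟨x, hxs⟩ : Metric.sphere (0 : (EuclideanSpace ℝ (Fin (n + 1)))) 1) ∈ Subtype.val ⁻¹' V := by
        rw [← hUp]; exact hxU
      exact hmem
  -- the projection away from e₁ and the cone over the equatorial part of V
  set p : (EuclideanSpace ℝ (Fin (n + 1))) → (EuclideanSpace ℝ (Fin (n + 1))) := fun y => y - ⟪y, e₁⟫ • e₁ with hp
  have hpcont : Continuous p :=
    continuous_id.sub (((continuous_id.inner (𝕜 := ℝ) continuous_const)).smul continuous_const)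
  have hpe : ∀ y : (EuclideanSpace ℝ (Fin (n + 1))), ⟪p y, e₁⟫ = 0 := by
    intro y
    rw [hp]
    simp only
    rw [inner_sub_left, real_inner_smul_left, real_inner_self_eq_norm_mul_norm, he₁]
    ring
  set S := {y : (EuclideanSpace ℝ (Fin (n + 1))) | p y ≠ 0} with hS
  have hSopen : IsOpen S := by
    have : S = p ⁻¹' ({0}ᶜ) := rfl
    rw [this]
    exact isOpen_compl_singleton.preimage hpcont
  set q : (EuclideanSpace ℝ (Fin (n + 1))) → (EuclideanSpace ℝ (Fin (n + 1))) := fun y => ‖p y‖⁻¹ • p y with hq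
  have hqcont : ContinuousOn q S :=
    ContinuousOn.smul ((hpcont.norm.continuousOn).inv₀ fun y hy => norm_ne_zero_iff.2 hy)
      hpcont.continuousOn
  set C := S ∩ q ⁻¹' U with hC
  have hCopen : IsOpen C := hqcont.isOpen_inter_preimage hSopen hUopen
  -- membership lemmas for C
  have hmemC : ∀ (b : (EuclideanSpace ℝ (Fin (n + 1)))) (t s' : ℝ), b ∈ V → ⟪b, e₁⟫ = 0 → 0 < t →
      t • b + s' • e₁ ∈ C := by
    intro b t s' hbV hbe ht
    have hb1 : ‖b‖ = 1 := mem_sphere_zero_iff_norm.1 (hVsub hbV)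
    have hb0 : b ≠ 0 := by intro h; rw [h, norm_zero] at hb1; norm_num at hb1
    have hyinner : ⟪t • b + s' • e₁, e₁⟫ = s' := by
      rw [inner_add_left, real_inner_smul_left, real_inner_smul_left, hbe,
        real_inner_self_eq_norm_mul_norm, he₁]
      ring
    have hpy : p (t • b + s' • e₁) = t • b := by
      rw [hp]; simp only; rw [hyinner]; abel
    have hpy0 : p (t • b + s' • e₁) ≠ 0 := by
      rw [hpy]; exact smul_ne_zero (ne_of_gt ht) hb0
    have hqy : q (t • b + s' • e₁) = b := by
      rw [hq]; simp only; rw [hpy, norm_smul, hb1, Real.norm_eq_abs, abs_of_pos ht,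
        mul_one, smul_smul, inv_mul_cancel₀ (ne_of_gt ht), one_smul]
    refine ⟨hpy0, ?_⟩
    show q (t • b + s' • e₁) ∈ U
    rw [hqy]
    exact (hVU ▸ hbV).1
  have hCmem : ∀ y ∈ C, ∃ b : (EuclideanSpace ℝ (Fin (n + 1))), (b ∈ V ∧ ⟪b, e₁⟫ = 0) ∧
      ∃ t s' : ℝ, 0 < t ∧ y = t • b + s' • e₁ := by
    rintro y ⟨hyS, hyU⟩
    have hpy0 : p y ≠ 0 := hyS
    have hq1 : ‖q y‖ = 1 := by
      rw [hq]; simp only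
      rw [norm_smul, norm_inv, norm_norm, inv_mul_cancel₀ (norm_ne_zero_iff.2 hpy0)]
    have hqV : q y ∈ V := by
      rw [hVU]
      exact ⟨hyU, mem_sphere_zero_iff_norm.2 hq1⟩
    have hqe : ⟪q y, e₁⟫ = 0 := by
      rw [hq]; simp only
      rw [real_inner_smul_left, hpe, mul_zero]
    refine ⟨q y, ⟨hqV, hqe⟩, ‖p y‖, ⟪y, e₁⟫, norm_pos_iff.2 hpy0, ?_⟩
    rw [hq]; simp only
    rw [smul_smul, mul_inv_cancel₀ (norm_ne_zero_iff.2 hpy0), one_smul, hp]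
    simp only
    abel
  -- 0 is not in the convex hull of C
  have h0 : (0 : (EuclideanSpace ℝ (Fin (n + 1)))) ∉ convexHull ℝ C := by
    intro h0
    rw [convexHull_eq] at h0
    obtain ⟨ι, t, wt, z, hwt0, hwt1, hzC, hcm⟩ := h0
    rw [Finset.centerMass_eq_of_sum_1 _ _ hwt1] at hcm
    have hdata : ∀ i : ι, ∃ (b : (EuclideanSpace ℝ (Fin (n + 1)))) (tv sv : ℝ), i ∈ t →
        ((b ∈ V ∧ ⟪b, e₁⟫ = 0) ∧ 0 < tv ∧ z i = tv • b + sv • e₁) := by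
      intro i
      by_cases hi : i ∈ t
      · obtain ⟨b, hb, tv, sv, htv, hz⟩ := hCmem (z i) (hzC i hi)
        exact ⟨b, tv, sv, fun _ => ⟨hb, htv, hz⟩⟩
      · exact ⟨a₀, 1, 0, fun h => absurd h hi⟩
    choose b tv sv hprop using hdata
    set m : ι → ℝ := fun i => wt i * tv i with hm
    have hkey : ∑ i ∈ t, wt i • z i =
        (∑ i ∈ t, m i • b i) + (∑ i ∈ t, wt i * sv i) • e₁ := by
      have hterm : ∀ i ∈ t, wt i • z i = m i • b i + (wt i * sv i) • e₁ := by
        intro i hi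
        rw [(hprop i hi).2.2, smul_add, smul_smul, smul_smul]
      rw [Finset.sum_congr rfl hterm, Finset.sum_add_distrib, Finset.sum_smul]
    rw [hcm] at hkey
    have hye : ⟪e₁, ∑ i ∈ t, m i • b i⟫ = 0 := by
      rw [inner_sum]
      apply Finset.sum_eq_zero
      intro i hi
      rw [real_inner_smul_right, real_inner_comm, (hprop i hi).1.2, mul_zero]
    have hσ : (∑ i ∈ t, wt i * sv i) = 0 := by
      have := congrArg (fun y => ⟪e₁, y⟫) hkey.symm
      simp only [inner_zero_right, inner_add_right, real_inner_smul_right] at this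
      rw [hye, real_inner_self_eq_norm_mul_norm, he₁] at this
      linarith
    rw [hσ, zero_smul, add_zero] at hkey
    have hbsum : ∑ i ∈ t, m i • b i = 0 := hkey.symm
    have hm0 : ∀ i ∈ t, 0 ≤ m i := fun i hi =>
      mul_nonneg (hwt0 i hi) (le_of_lt (hprop i hi).2.1)
    have hM : 0 < ∑ i ∈ t, m i := by
      apply Finset.sum_pos'
      · exact hm0
      · have hex : ∃ i ∈ t, 0 < wt i := by
          by_contra hcon
          push_neg at hcon
          have : ∑ i ∈ t, wt i = 0 :=
            Finset.sum_eq_zero fun i hi => le_antisymm (hcon i hi) (hwt0 i hi)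
          rw [hwt1] at this; norm_num at this
        obtain ⟨i, hi, hwi⟩ := hex
        exact ⟨i, hi, mul_pos hwi (hprop i hi).2.1⟩
    set M := ∑ i ∈ t, m i with hMdef
    apply core19 V e₁ he₁ hconvsupp t b (fun i => m i / M)
    · intro i hi
      exact mem_sphere_zero_iff_norm.1 (hVsub (hprop i hi).1.1)
    · intro i hi
      rw [real_inner_comm]
      exact (hprop i hi).1.2
    · intro i hi
      exact seg19 V e₁ he₁ hup hlo (hprop i hi).1.1
        (mem_sphere_zero_iff_norm.1 (hVsub (hprop i hi).1.1))
        (by rw [real_inner_comm]; exact (hprop i hi).1.2)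
    · intro i hi
      exact div_nonneg (hm0 i hi) (le_of_lt hM)
    · rw [← Finset.sum_div, div_self (ne_of_gt hM)]
    · have : ∀ i ∈ t, (m i / M) • b i = M⁻¹ • (m i • b i) := by
        intro i _
        rw [smul_smul, div_eq_inv_mul]
      rw [Finset.sum_congr rfl this, ← Finset.smul_sum, hbsum, smul_zero]
  have hP0 : (0 : (EuclideanSpace ℝ (Fin (n + 1)))) ∉ interior (convexHull ℝ C) := fun h => h0 (interior_subset h)
  obtain ⟨f, hf⟩ := geometric_hahn_banach_open_point
    ((convex_convexHull ℝ C).interior) isOpen_interior hP0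
  have hfC : ∀ y ∈ C, f y < 0 := by
    intro y hy
    have hyP : y ∈ interior (convexHull ℝ C) :=
      interior_maximal (subset_convexHull ℝ C) hCopen hy
    have := hf y hyP
    simpa using this
  have ha₀C : a₀ ∈ C := by
    have := hmemC a₀ 1 0 ha₀V ha₀e one_pos
    simpa using this
  have hfa₀ : f a₀ < 0 := hfC _ ha₀C
  have hfe₁ : f e₁ = 0 := by
    by_contra hne
    have hmem := hmemC a₀ 1 ((1 - f a₀) / f e₁) ha₀V ha₀e one_pos
    have hlt := hfC _ hmem
    rw [map_add, map_smul, map_smul, one_smul, smul_eq_mul] at hlt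
    rw [div_mul_cancel₀ _ hne] at hlt
    linarith
  set u := (InnerProductSpace.toDual ℝ (EuclideanSpace ℝ (Fin (n + 1)))).symm f with hu
  have huip : ∀ y : (EuclideanSpace ℝ (Fin (n + 1))), ⟪u, y⟫ = f y := fun y => InnerProductSpace.toDual_symm_apply
  have hune : u ≠ 0 := by
    intro h
    have := huip a₀
    rw [h, inner_zero_left] at this
    linarith
  refine ⟨‖u‖⁻¹ • u, ?_, ?_, ?_⟩
  · rw [norm_smul, norm_inv, norm_norm, inv_mul_cancel₀ (norm_ne_zero_iff.2 hune)]
  · rw [real_inner_smul_right, real_inner_comm, huip, hfe₁, mul_zero]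
  · intro x hxV hxe
    have hxC : x ∈ C := by
      have := hmemC x 1 0 hxV hxe one_pos
      simpa using this
    have hfx : f x < 0 := hfC _ hxC
    rw [real_inner_smul_right]
    have hxu : ⟪x, u⟫ = f x := by rw [real_inner_comm]; exact huip x
    rw [hxu]
    exact mul_neg_of_pos_of_neg (inv_pos.2 (norm_pos_iff.2 hune)) hfx
end
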